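/- arXiv:2311.16178 — 5 statements merged into one kernel-verified Lean document; each statement's English description precedes it below -/
import Mathlib

section
/- If f(z)=z+a₂z²+a₃z³+⋯ is univalent on the unit disc, then the function f₂(z)=√(f(z²)) (choosing the branch with f₂(z)=z+O(z³)) is an odd univalent function on the unit disc of the form f₂(z)=z+c₃z³+c₅z⁵+⋯. -/
/-!
Since `f₂ z ^ 2 = f (z ^ 2)` is even, `(f₂ z + f₂ (-z)) (f₂ z - f₂ (-z)) = 0` on the disc, so
by the identity theorem `f₂` is either odd or even there; an even function has `f₂'(0) = 0`,
so `f₂` is odd.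
Injectivity then follows from that of `f`: `f₂ a = f₂ b` forces `a ^ 2 = b ^ 2`, and the case
`a = -b` collapses to `a = b = 0` by oddness. The odd Taylor expansion is read off from the
vanishing of the even-order derivatives of an odd function at `0`.
-/

open Metric Topology Filter Set Nat

section Parity

variable {𝕜 F : Type*} [NontriviallyNormedField 𝕜] [NormedAddCommGroup F] [NormedSpace 𝕜 F]
  [IsAddTorsionFree F] {g : 𝕜 → F}

theorem iteratedDeriv_two_mul_eq_zero_of_odd (hg : ∀ᶠ z in 𝓝 0, g (-z) = -g z) (n : ℕ) :
    iteratedDeriv (2 * n) g 0 = 0 := by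
  have hg' : g =ᶠ[𝓝 0] fun z => -g (-z) := hg.mono fun z hz => by simp [hz]
  rw [← self_eq_neg]
  calc iteratedDeriv (2 * n) g 0 = iteratedDeriv (2 * n) (fun z => -g (-z)) 0 :=
        hg'.iteratedDeriv_eq _
    _ = -iteratedDeriv (2 * n) g 0 := by
      rw [iteratedDeriv_fun_neg, iteratedDeriv_comp_neg]
      simp [pow_mul]

theorem iteratedDeriv_two_mul_add_one_eq_zero_of_even (hg : ∀ᶠ z in 𝓝 0, g (-z) = g z)
    (n : ℕ) :
    iteratedDeriv (2 * n + 1) g 0 = 0 := by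
  rw [← self_eq_neg]
  calc iteratedDeriv (2 * n + 1) g 0 = iteratedDeriv (2 * n + 1) (fun z => g (-z)) 0 :=
        EventuallyEq.iteratedDeriv_eq _ (hg.mono fun z hz => hz.symm)
    _ = -iteratedDeriv (2 * n + 1) g 0 := by
      rw [iteratedDeriv_comp_neg]
      simp [pow_succ, pow_mul]

end Parity

theorem AnalyticOnNhd.odd_of_sq_comp_neg_eq {𝕜 : Type*} [NontriviallyNormedField 𝕜]
    [CharZero 𝕜] {U : Set 𝕜} {g : 𝕜 → 𝕜} (hg : AnalyticOnNhd 𝕜 g U) (hU : IsOpen U)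
    (hUc : IsPreconnected U)
    (h0 : 0 ∈ U) (hneg : ∀ z ∈ U, -z ∈ U) (hsq : ∀ z ∈ U, g (-z) ^ 2 = g z ^ 2)
    (hd : deriv g 0 ≠ 0) : ∀ z ∈ U, g (-z) = -g z := by
  have hgneg : AnalyticOnNhd 𝕜 (fun z => g (-z)) U := fun z hz =>
    (hg _ (hneg z hz)).comp analyticAt_id.neg
  have hprod : ∀ z ∈ U, (g (-z) + g z) * (g (-z) - g z) = 0 := fun z hz => by
    linear_combination hsq z hz
  rcases (hgneg.add hg).eq_zero_or_eq_zero_of_mul_eq_zero (hgneg.sub hg) hprod hUc with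
    hodd | heven
  · exact fun z hz => eq_neg_of_add_eq_zero_left (hodd z hz)
  · refine absurd ?_ hd
    have heven' : ∀ᶠ z in 𝓝 0, g (-z) = g z :=
      eventually_of_mem (hU.mem_nhds h0) fun z hz => sub_eq_zero.1 (heven z hz)
    simpa using iteratedDeriv_two_mul_add_one_eq_zero_of_even heven' 0

theorem Set.InjOn.of_sq_eq_comp_sq {R S : Type*} [CommRing R] [NoZeroDivisors R] [Ring S]
    [IsAddTorsionFree S] {U V : Set R} {f g : R → S} (hf : InjOn f V)
    (hUV : MapsTo (· ^ 2) U V) (h0 : 0 ∈ U) (hodd : ∀ z ∈ U, g (-z) = -g z)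
    (hsq : ∀ z ∈ U, g z ^ 2 = f (z ^ 2)) : InjOn g U := by
  intro a ha b hb hab
  have hab2 : a ^ 2 = b ^ 2 := hf (hUV ha) (hUV hb) (by rw [← hsq a ha, ← hsq b hb, hab])
  rcases sq_eq_sq_iff_eq_or_eq_neg.1 hab2 with h | rfl
  · exact h
  have hgb : g b = 0 := self_eq_neg.1 (hab.symm.trans (hodd b hb))
  have hg0 : g 0 = 0 := self_eq_neg.1 (by simpa using hodd 0 h0)
  have hb0 : b ^ 2 = 0 ^ 2 :=
    hf (hUV hb) (hUV h0) (by rw [← hsq b hb, ← hsq 0 h0, hgb, hg0])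
  simp [(pow_eq_zero_iff two_ne_zero).1 (hb0.trans (zero_pow two_ne_zero))]

theorem Complex.mapsTo_sq_ball_zero_one : MapsTo (· ^ 2) (ball (0 : ℂ) 1) (ball 0 1) :=
  fun z hz => by
    simpa [norm_pow] using pow_lt_one₀ (norm_nonneg z) (mem_ball_zero_iff.1 hz) two_ne_zero

theorem stmt_2_general (f : ℂ → ℂ)
    (hI : Set.InjOn f (Metric.ball 0 1))
    (f₂ : ℂ → ℂ) (hA₂ : AnalyticOn ℂ f₂ (Metric.ball 0 1))
    (hsq : ∀ z ∈ Metric.ball (0:ℂ) 1, (f₂ z) ^ 2 = f (z ^ 2))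
    (hd₂ : deriv f₂ 0 = 1) :
    Set.InjOn f₂ (Metric.ball 0 1) ∧
    (∀ z ∈ Metric.ball (0:ℂ) 1, f₂ (-z) = -f₂ z) ∧
    ∃ c : ℕ → ℂ, c 0 = 0 ∧ c 1 = 1 ∧ (∀ n, c (2 * n) = 0) ∧
      ∀ z ∈ Metric.ball (0:ℂ) 1, HasSum (fun n => c n * z ^ n) (f₂ z) := by
  have hN₂ : AnalyticOnNhd ℂ f₂ (ball 0 1) := isOpen_ball.analyticOn_iff_analyticOnNhd.1 hA₂
  have h0 : (0 : ℂ) ∈ ball (0 : ℂ) 1 := mem_ball_self one_pos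
  have hneg : ∀ z ∈ ball (0 : ℂ) 1, -z ∈ ball (0 : ℂ) 1 := fun z hz => by simpa using hz
  have hodd : ∀ z ∈ ball (0 : ℂ) 1, f₂ (-z) = -f₂ z :=
    hN₂.odd_of_sq_comp_neg_eq isOpen_ball (convex_ball 0 1).isPreconnected h0 hneg
      (fun z hz => by rw [hsq z hz, hsq (-z) (hneg z hz), neg_sq]) (by simp [hd₂])
  have heven : ∀ n, iteratedDeriv (2 * n) f₂ 0 = 0 :=
    iteratedDeriv_two_mul_eq_zero_of_odd (eventually_of_mem (isOpen_ball.mem_nhds h0) hodd)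
  refine ⟨hI.of_sq_eq_comp_sq Complex.mapsTo_sq_ball_zero_one h0 hodd hsq, hodd,
    fun n => (n ! : ℂ)⁻¹ * iteratedDeriv n f₂ 0, by simpa using heven 0, by simp [hd₂],
    fun n => by simp [heven n], fun z hz => ?_⟩
  simpa [mul_comm, mul_left_comm] using
    Complex.hasSum_taylorSeries_on_ball hN₂.differentiableOn hz

theorem stmt_2 (f : ℂ → ℂ) (hA : AnalyticOn ℂ f (Metric.ball 0 1))
    (hI : Set.InjOn f (Metric.ball 0 1))
    (hf0 : f 0 = 0) (hf1 : deriv f 0 = 1)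
    (f₂ : ℂ → ℂ) (hA₂ : AnalyticOn ℂ f₂ (Metric.ball 0 1))
    (hsq : ∀ z ∈ Metric.ball (0:ℂ) 1, (f₂ z) ^ 2 = f (z ^ 2))
    (hd₂ : deriv f₂ 0 = 1) :
    Set.InjOn f₂ (Metric.ball 0 1) ∧
    (∀ z ∈ Metric.ball (0:ℂ) 1, f₂ (-z) = -f₂ z) ∧
    ∃ c : ℕ → ℂ, c 0 = 0 ∧ c 1 = 1 ∧ (∀ n, c (2 * n) = 0) ∧
      ∀ z ∈ Metric.ball (0:ℂ) 1, HasSum (fun n => c n * z ^ n) (f₂ z) :=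
  stmt_2_general f hI f₂ hA₂ hsq hd₂
end

section
/- Let ω_{p,q} be the Grunsky coefficients of f₂(z)=√(f(z²)) for f ∈ S with Taylor coefficients aₙ. Then a₄ = 2ω₃₃ + 8ω₁₁ω₁₃ + (10/3)ω₁₁³ and a₅ = 2ω₃₅ + 8ω₁₁ω₃₃ + 5ω₁₃² + 18ω₁₁²ω₁₃ + (7/3)ω₁₁⁴. -/
/-!
Write `f₂ t = ∑ bₙ tⁿ`. Since `f₂² = f(z²)`, `b₀ = 0` and `b₁ = 1`, the coefficients `b₂, …, b₈`
vanish and `a₄`, `a₅` are quadratic in `b₃, …, b₉`.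

For fixed `z`, expand the Grunsky logarithm in `t` as `W(t) = ∑ gₚ(z) tᵖ` with
`gₚ(z) = ∑ ω_{p,q} z^q`. Differentiating `exp W(t) · (t - z) = f₂ t - f₂ z` in `t` removes the
exponential: `(t - z)(f₂ t - f₂ z) W'(t) + f₂ t - f₂ z = (t - z) f₂'(t)`. Its coefficients of
`t⁰, t¹, t²` are identities between `g₁, g₂, g₃` and `f₂` as functions of `z`, and comparing
their `z`-coefficients expresses `ω₁₁, ω₁₃, ω₃₃, ω₃₅` through `b₃, …, b₉`.
-/

open Metric PowerSeries

/-- Coefficients are kept in `ℂ⟦X⟧` so that identities between functions on the disc become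
ring identities there. -/
def HasPowerSeriesOnBall (F : ℂ → ℂ) (φ : ℂ⟦X⟧) (r : ℝ) : Prop :=
  ∀ z : ℂ, ‖z‖ < r → HasSum (fun n => coeff n φ * z ^ n) (F z)

namespace HasPowerSeriesOnBall

variable {F G : ℂ → ℂ} {φ ψ : ℂ⟦X⟧} {r : ℝ}

lemma le_radius (h : HasPowerSeriesOnBall F φ r) :
    ENNReal.ofReal r ≤ (FormalMultilinearSeries.ofScalars ℂ (coeff · φ)).radius := by
  refine ENNReal.le_of_forall_nnreal_lt fun ρ hρ => ?_
  have hρr : ‖(ρ : ℂ)‖ < r := by simpa using (ENNReal.coe_lt_ofReal).1 hρ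
  refine FormalMultilinearSeries.le_radius_of_tendsto _ (l := 0) ?_
  simpa [FormalMultilinearSeries.ofScalars_norm] using
    (h _ hρr).summable.tendsto_atTop_zero.norm

lemma hasFPowerSeriesOnBall (h : HasPowerSeriesOnBall F φ r) (hr : 0 < r) :
    HasFPowerSeriesOnBall F (FormalMultilinearSeries.ofScalars ℂ (coeff · φ)) 0
      (ENNReal.ofReal r) where
  r_le := h.le_radius
  r_pos := by simpa using hr
  hasSum {y} hy := by
    simpa [FormalMultilinearSeries.ofScalars_apply_eq, mul_comm] using h y (by simpa using hy)

lemma summable_norm (h : HasPowerSeriesOnBall F φ r) {z : ℂ} (hz : ‖z‖ < r) :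
    Summable fun n => ‖coeff n φ * z ^ n‖ := by
  have := (FormalMultilinearSeries.ofScalars ℂ (coeff · φ)).summable_norm_apply
    (x := z) (lt_of_lt_of_le ?_ h.le_radius)
  · simpa [FormalMultilinearSeries.ofScalars_apply_eq, mul_comm] using this
  rw [edist_zero_right, ← ofReal_norm]
  exact (ENNReal.ofReal_lt_ofReal_iff ((norm_nonneg _).trans_lt hz)).2 hz

lemma differentiableOn (h : HasPowerSeriesOnBall F φ r) : DifferentiableOn ℂ F (ball 0 r) := by
  rcases le_or_gt r 0 with hr | hr
  · simp only [ball_eq_empty.2 hr, differentiableOn_empty]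
  simpa [eball_ofReal] using (h.hasFPowerSeriesOnBall hr).differentiableOn

lemma coeff_eq_iteratedDeriv (h : HasPowerSeriesOnBall F φ r) (hr : 0 < r) (n : ℕ) :
    coeff n φ = iteratedDeriv n F 0 / n.factorial := by
  have hF := (h.hasFPowerSeriesOnBall hr).hasFPowerSeriesAt
  have := hF.eq_formalMultilinearSeries hF.analyticAt.hasFPowerSeriesAt
  exact congrFun (FormalMultilinearSeries.ofScalars_series_injective ℂ ℂ this) n

lemma unique (hφ : HasPowerSeriesOnBall F φ r) (hψ : HasPowerSeriesOnBall F ψ r) (hr : 0 < r) :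
    φ = ψ := by
  ext n
  rw [hφ.coeff_eq_iteratedDeriv hr, hψ.coeff_eq_iteratedDeriv hr]

lemma congr (h : HasPowerSeriesOnBall F φ r) (hFG : ∀ z : ℂ, ‖z‖ < r → F z = G z) :
    HasPowerSeriesOnBall G φ r :=
  fun z hz => hFG z hz ▸ h z hz

lemma deriv (h : HasPowerSeriesOnBall F φ r) : HasPowerSeriesOnBall (deriv F) (d⁄dX ℂ φ) r := by
  intro z hz
  have hr : 0 < r := (norm_nonneg z).trans_lt hz
  have hF' := h.differentiableOn.deriv isOpen_ball
  convert Complex.hasSum_taylorSeries_on_ball hF' (mem_ball_zero_iff.2 hz) using 1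
  · rfl
  funext n
  rw [coeff_derivative, h.coeff_eq_iteratedDeriv hr, iteratedDeriv_succ', Nat.factorial_succ,
    smul_eq_mul, smul_eq_mul, sub_zero]
  push_cast
  field_simp

lemma add (hF : HasPowerSeriesOnBall F φ r) (hG : HasPowerSeriesOnBall G ψ r) :
    HasPowerSeriesOnBall (fun z => F z + G z) (φ + ψ) r := fun z hz => by
  simpa [add_mul] using (hF z hz).add (hG z hz)

lemma sub (hF : HasPowerSeriesOnBall F φ r) (hG : HasPowerSeriesOnBall G ψ r) :
    HasPowerSeriesOnBall (fun z => F z - G z) (φ - ψ) r := fun z hz => by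
  simpa [sub_mul] using (hF z hz).sub (hG z hz)

lemma mul (hF : HasPowerSeriesOnBall F φ r) (hG : HasPowerSeriesOnBall G ψ r) :
    HasPowerSeriesOnBall (fun z => F z * G z) (φ * ψ) r := fun z hz => by
  have hsum := tsum_mul_tsum_eq_tsum_sum_antidiagonal_of_summable_norm
    (hF.summable_norm hz) (hG.summable_norm hz)
  rw [(hF z hz).tsum_eq, (hG z hz).tsum_eq] at hsum
  have hs := (summable_norm_sum_mul_antidiagonal_of_summable_norm
    (hF.summable_norm hz) (hG.summable_norm hz)).of_norm.hasSum
  rw [← hsum] at hs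
  convert hs using 1
  · rfl
  funext n
  rw [coeff_mul, Finset.sum_mul]
  refine Finset.sum_congr rfl fun kl hkl => ?_
  rw [← Finset.HasAntidiagonal.mem_antidiagonal.1 hkl, pow_add]
  ring

lemma comp_pow (h : HasPowerSeriesOnBall F φ r) {p : ℕ} (hp : p ≠ 0) {s : ℝ} (hs : s ^ p ≤ r) :
    HasPowerSeriesOnBall (fun z => F (z ^ p)) (expand p hp φ) s := fun z hz => by
  have hzp : ‖z ^ p‖ < r := by
    rw [norm_pow]
    exact (pow_lt_pow_left₀ hz (norm_nonneg z) hp).trans_le hs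
  refine ((mul_right_injective₀ hp).hasSum_iff fun n hn => ?_).1 ?_
  · rw [coeff_expand_of_not_dvd p hp φ fun ⟨m, hm⟩ => hn ⟨m, hm.symm⟩, zero_mul]
  · simpa [Function.comp_def, pow_mul] using h _ hzp

end HasPowerSeriesOnBall

lemma hasPowerSeriesOnBall_const (c : ℂ) (r : ℝ) :
    HasPowerSeriesOnBall (fun _ => c) (C c) r := fun z _ => by
  convert hasSum_single (f := fun n => coeff n (C c) * z ^ n) 0 fun n hn => by
    simp [coeff_C, hn]
  simp

lemma hasPowerSeriesOnBall_id (r : ℝ) : HasPowerSeriesOnBall id X r := fun z _ => by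
  convert hasSum_single (f := fun n => coeff n (X : ℂ⟦X⟧) * z ^ n) 1 fun n hn => by
    simp [coeff_X, hn]
  simp

lemma DifferentiableOn.hasPowerSeriesOnBall {F : ℂ → ℂ} {r : ℝ}
    (hF : DifferentiableOn ℂ F (ball 0 r)) :
    HasPowerSeriesOnBall F (mk fun n => iteratedDeriv n F 0 / n.factorial) r := fun z hz => by
  convert Complex.hasSum_taylorSeries_on_ball hF (mem_ball_zero_iff.2 hz) using 1
  · rfl
  funext n
  rw [coeff_mk, smul_eq_mul, smul_eq_mul, sub_zero]
  ring

lemma slope_identity_of_exp_eq_slope {F W : ℂ → ℂ} {B G : ℂ⟦X⟧} {r : ℝ} {z : ℂ} (hr : 0 < r)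
    (hF : HasPowerSeriesOnBall F B r) (hW : HasPowerSeriesOnBall W G r)
    (hexp : ∀ t : ℂ, ‖t‖ < r → t ≠ z → Complex.exp (W t) = (F t - F z) / (t - z)) :
    (X - C z) * (B - C (F z)) * d⁄dX ℂ G + (B - C (F z)) = (X - C z) * d⁄dX ℂ B := by
  have hWd : ∀ t : ℂ, ‖t‖ < r → HasDerivAt W (deriv W t) t := fun t ht =>
    (hW.differentiableOn.differentiableAt
      (isOpen_ball.mem_nhds (mem_ball_zero_iff.2 ht))).hasDerivAt
  have hE := DifferentiableOn.hasPowerSeriesOnBall (F := fun t => Complex.exp (W t)) (r := r)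
    fun t ht => (hWd t (mem_ball_zero_iff.1 ht)).cexp.differentiableAt.differentiableWithinAt
  set ε := mk fun n => iteratedDeriv n (fun t => Complex.exp (W t)) 0 / n.factorial
  have hslope : ε * (X - C z) = B - C (F z) := by
    refine (hE.mul ((hasPowerSeriesOnBall_id r).sub (hasPowerSeriesOnBall_const z r))).unique
      ((hF.sub (hasPowerSeriesOnBall_const (F z) r)).congr fun t ht => ?_) hr
    rcases eq_or_ne t z with rfl | htz
    · simp
    · rw [hexp t ht htz, id, div_mul_cancel₀ _ (sub_ne_zero.2 htz)]
  have hderiv : d⁄dX ℂ ε = ε * d⁄dX ℂ G :=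
    hE.deriv.unique ((hE.mul hW.deriv).congr fun t ht => ((hWd t ht).cexp.deriv).symm) hr
  have hleibniz := congrArg (d⁄dX ℂ) hslope
  simp only [Derivation.leibniz, map_sub, derivative_X, derivative_C, smul_eq_mul] at hleibniz
  linear_combination (X - C z) * hleibniz - ((X - C z) * d⁄dX ℂ G + 1) * hslope
    - (X - C z) ^ 2 * hderiv

lemma coeffs_of_slope_identity {B G : ℂ⟦X⟧} {z c : ℂ}
    (h : (X - C z) * (B - C c) * d⁄dX ℂ G + (B - C c) = (X - C z) * d⁄dX ℂ B)
    (h0 : coeff 0 B = 0) (h1 : coeff 1 B = 1) (h2 : coeff 2 B = 0) :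
    c - z = z * c * coeff 1 G ∧ (z + c) * coeff 1 G = 2 * z * c * coeff 2 G ∧
      coeff 1 G + 3 * z * coeff 3 B + 3 * z * c * coeff 3 G = 2 * (z + c) * coeff 2 G := by
  have e0 := congrArg (coeff 0) h
  have e1 := congrArg (coeff 1) h
  have e2 := congrArg (coeff 2) h
  simp [sub_mul, mul_sub, coeff_mul, Finset.Nat.antidiagonal_succ, coeff_derivative, coeff_C,
    coeff_X, mul_assoc, h0, h1, h2, -coeff_zero_eq_constantCoeff] at e0 e1 e2
  exact ⟨by linear_combination -e0, by linear_combination -e1, by linear_combination e2⟩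

/-- The logarithm of the difference quotient is encoded through `exp`, off the diagonal. -/
def HasGrunskyCoeffs (F : ℂ → ℂ) (ω : ℕ → ℕ → ℂ) (r : ℝ) : Prop :=
  ∀ t ∈ ball (0 : ℂ) r, ∀ z ∈ ball (0 : ℂ) r, t ≠ z →
    ∃ w, HasSum (fun pq : ℕ × ℕ => ω pq.1 pq.2 * t ^ pq.1 * z ^ pq.2) w ∧
      Complex.exp w = (F t - F z) / (t - z)

/-- The coefficient of `tᵖ` in the Grunsky logarithm, as a function of `z`. -/
noncomputable def grunskyRow (ω : ℕ → ℕ → ℂ) (p : ℕ) (z : ℂ) : ℂ := ∑' q, ω p q * z ^ q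

namespace HasGrunskyCoeffs

variable {F : ℂ → ℂ} {ω : ℕ → ℕ → ℂ} {r : ℝ} {t z : ℂ}

lemma summable_norm (h : HasGrunskyCoeffs F ω r) (ht : ‖t‖ < r) (hz : ‖z‖ < r) :
    Summable fun pq : ℕ × ℕ => ‖ω pq.1 pq.2 * t ^ pq.1 * z ^ pq.2‖ := by
  obtain ⟨ρ, hρ, hρr⟩ := exists_between (max_lt ht hz)
  have hρ0 : 0 < ρ := (le_max_left _ _).trans_lt hρ |>.trans_le' (norm_nonneg t)
  have hnorm : ‖(ρ : ℂ)‖ = ρ := by simp [hρ0.le]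
  obtain ⟨w, hw, -⟩ := h ρ (mem_ball_zero_iff.2 (by rwa [hnorm])) (-ρ)
    (mem_ball_zero_iff.2 (by rwa [norm_neg, hnorm])) (by simp [self_eq_neg, hρ0.ne'])
  refine .of_nonneg_of_le (fun _ => norm_nonneg _) (fun pq => ?_)
    (summable_norm_iff.2 hw.summable)
  simp only [norm_mul, norm_pow, norm_neg, hnorm]
  gcongr
  exacts [(le_max_left _ _).trans hρ.le, (le_max_right _ _).trans hρ.le]

lemma hasPowerSeriesOnBall_row (h : HasGrunskyCoeffs F ω r) (p : ℕ) :
    HasPowerSeriesOnBall (grunskyRow ω p) (mk (ω p)) r := fun z hz => by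
  have hr : 0 < r := (norm_nonneg z).trans_lt hz
  have ht : ‖((r / 2 : ℝ) : ℂ)‖ < r := by
    rw [Complex.norm_real, Real.norm_of_nonneg (by positivity)]
    linarith
  have ht0 : ((r / 2 : ℝ) : ℂ) ^ p ≠ 0 :=
    pow_ne_zero _ (by exact_mod_cast (by positivity : r / 2 ≠ 0))
  have hrow := (((h.summable_norm ht hz).of_norm.comp_injective
    (Prod.mk_right_injective p)).mul_left (((r / 2 : ℝ) : ℂ) ^ p)⁻¹)
  simp only [coeff_mk, grunskyRow]
  refine (hrow.congr fun q => ?_).hasSum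
  simp only [Function.comp_apply]
  field_simp

lemma hasSum_rows (h : HasGrunskyCoeffs F ω r) {w : ℂ}
    (hsum : HasSum (fun pq : ℕ × ℕ => ω pq.1 pq.2 * t ^ pq.1 * z ^ pq.2) w) (hz : ‖z‖ < r) :
    HasSum (fun p => grunskyRow ω p z * t ^ p) w :=
  hsum.prod_fiberwise fun p => by
    simpa [mul_right_comm] using (h.hasPowerSeriesOnBall_row p z hz).mul_right (t ^ p)

lemma hasPowerSeriesOnBall_slice (h : HasGrunskyCoeffs F ω r) (hz : ‖z‖ < r) :
    HasPowerSeriesOnBall (fun t => ∑' p, grunskyRow ω p z * t ^ p)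
      (mk fun p => grunskyRow ω p z) r := fun t ht => by
  simpa using (h.hasSum_rows (h.summable_norm ht hz).of_norm.hasSum hz).summable.hasSum

lemma exp_slice (h : HasGrunskyCoeffs F ω r) (ht : ‖t‖ < r) (hz : ‖z‖ < r) (htz : t ≠ z) :
    Complex.exp (∑' p, grunskyRow ω p z * t ^ p) = (F t - F z) / (t - z) := by
  obtain ⟨w, hw, hexp⟩ := h t (mem_ball_zero_iff.2 ht) z (mem_ball_zero_iff.2 hz) htz
  rwa [(h.hasSum_rows hw hz).tsum_eq]

lemma row_identities (h : HasGrunskyCoeffs F ω r) {B : ℂ⟦X⟧} (hB : HasPowerSeriesOnBall F B r)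
    (h0 : coeff 0 B = 0) (h1 : coeff 1 B = 1) (h2 : coeff 2 B = 0) (hz : ‖z‖ < r) :
    F z - z = z * F z * grunskyRow ω 1 z ∧
      (z + F z) * grunskyRow ω 1 z = 2 * z * F z * grunskyRow ω 2 z ∧
      grunskyRow ω 1 z + 3 * z * coeff 3 B + 3 * z * F z * grunskyRow ω 3 z =
        2 * (z + F z) * grunskyRow ω 2 z := by
  have hr : 0 < r := (norm_nonneg z).trans_lt hz
  have hslope := slope_identity_of_exp_eq_slope hr hB (h.hasPowerSeriesOnBall_slice hz)
    fun t ht htz => h.exp_slice ht hz htz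
  simpa using coeffs_of_slope_identity hslope h0 h1 h2

lemma series_identities (h : HasGrunskyCoeffs F ω r) (hr : 0 < r) {B : ℂ⟦X⟧}
    (hB : HasPowerSeriesOnBall F B r)
    (h0 : coeff 0 B = 0) (h1 : coeff 1 B = 1) (h2 : coeff 2 B = 0) :
    B - X = X * B * mk (ω 1) ∧
      (X + B) * mk (ω 1) = 2 * X * B * mk (ω 2) ∧
      mk (ω 1) + 3 * X * C (coeff 3 B) + 3 * X * B * mk (ω 3) = 2 * (X + B) * mk (ω 2) := by
  have hX := hasPowerSeriesOnBall_id r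
  have hC (c : ℂ) := hasPowerSeriesOnBall_const c r
  have hrow := h.hasPowerSeriesOnBall_row
  have hrows {z : ℂ} (hz : ‖z‖ < r) := h.row_identities hB h0 h1 h2 hz
  refine ⟨?_, ?_, ?_⟩
  · exact (hB.sub hX).unique
      (((hX.mul hB).mul (hrow 1)).congr fun z hz => (hrows hz).1.symm) hr
  · simpa [map_ofNat C] using ((hX.add hB).mul (hrow 1)).unique
      ((((hC 2).mul hX).mul hB).mul (hrow 2) |>.congr fun z hz => (hrows hz).2.1.symm) hr
  · simpa [map_ofNat C] using (((hrow 1).add (((hC 3).mul hX).mul (hC (coeff 3 B)))).add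
      ((((hC 3).mul hX).mul hB).mul (hrow 3))).unique
      (((hC 2).mul (hX.add hB)).mul (hrow 2) |>.congr fun z hz => (hrows hz).2.2.symm) hr

end HasGrunskyCoeffs

lemma coeffs_of_mul_self_eq_expand_two {A B : ℂ⟦X⟧} (hsq : B * B = expand 2 two_ne_zero A)
    (h0 : coeff 0 B = 0) (h1 : coeff 1 B = 1) :
    coeff 2 B = 0 ∧ coeff 4 B = 0 ∧ coeff 6 B = 0 ∧ coeff 8 B = 0 ∧
      coeff 4 A = 2 * coeff 7 B + 2 * coeff 3 B * coeff 5 B ∧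
      coeff 5 A = 2 * coeff 9 B + 2 * coeff 3 B * coeff 7 B + coeff 5 B ^ 2 := by
  have e (n : ℕ) := congrArg (coeff n) hsq
  simp only [coeff_mul, coeff_expand] at e
  obtain ⟨e3, e5, e7, e9, e8, e10⟩ : _ ∧ _ ∧ _ ∧ _ ∧ _ ∧ _ := ⟨e 3, e 5, e 7, e 9, e 8, e 10⟩
  norm_num [Finset.Nat.antidiagonal_succ, h0, h1] at e3 e5 e7 e9 e8 e10
  have hb4 : coeff 4 B = 0 := by linear_combination (e5 - 2 * coeff 3 B * e3) / 2
  have hb6 : coeff 6 B = 0 := by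
    linear_combination (e7 - 2 * coeff 5 B * e3 - 2 * coeff 3 B * hb4) / 2
  have hb8 : coeff 8 B = 0 := by
    linear_combination (e9 - 2 * coeff 7 B * e3 - 2 * coeff 3 B * hb6 - 2 * coeff 5 B * hb4) / 2
  refine ⟨e3, hb4, hb6, hb8, ?_, ?_⟩
  · linear_combination -e8 + 2 * coeff 6 B * e3 + coeff 4 B * hb4
  · linear_combination -e10 + 2 * coeff 8 B * e3 + 2 * coeff 6 B * hb4

lemma grunsky_coeffs_of_series_identities {ω : ℕ → ℕ → ℂ} {B : ℂ⟦X⟧}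
    (h0 : coeff 0 B = 0) (h1 : coeff 1 B = 1) (h2 : coeff 2 B = 0)
    (h4 : coeff 4 B = 0) (h6 : coeff 6 B = 0) (h8 : coeff 8 B = 0) (hsym : ω 3 1 = ω 1 3)
    (I1 : B - X = X * B * mk (ω 1))
    (I2 : (X + B) * mk (ω 1) = 2 * X * B * mk (ω 2))
    (I3 : mk (ω 1) + 3 * X * C (coeff 3 B) + 3 * X * B * mk (ω 3) = 2 * (X + B) * mk (ω 2)) :
    ω 1 1 = coeff 3 B ∧ ω 1 3 = coeff 5 B - coeff 3 B ^ 2 ∧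
      ω 3 3 = coeff 7 B - 3 * coeff 3 B * coeff 5 B + 7 / 3 * coeff 3 B ^ 3 ∧
      ω 3 5 = coeff 9 B - 3 * coeff 3 B * coeff 7 B + 8 * coeff 3 B ^ 2 * coeff 5 B
        - 2 * coeff 5 B ^ 2 - 4 * coeff 3 B ^ 4 := by
  rw [← map_ofNat C 2] at I2 I3
  rw [← map_ofNat C 3] at I3
  have e1 (n : ℕ) := congrArg (coeff (n + 1)) I1
  have e2 (n : ℕ) := congrArg (coeff (n + 1)) I2
  have e3 (n : ℕ) := congrArg (coeff (n + 1)) I3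
  simp only [mul_assoc, coeff_succ_X_mul, map_sub, add_mul, map_add, coeff_C_mul, coeff_X,
    coeff_mk, mul_add] at e1 e2 e3
  obtain ⟨e13, e15, e17, e19⟩ : _ ∧ _ ∧ _ ∧ _ := ⟨e1 2, e1 4, e1 6, e1 8⟩
  obtain ⟨e22, e24, e26, e28⟩ : _ ∧ _ ∧ _ ∧ _ := ⟨e2 1, e2 3, e2 5, e2 7⟩
  obtain ⟨e35, e37⟩ : _ ∧ _ := ⟨e3 4, e3 6⟩
  norm_num [coeff_mul, Finset.Nat.antidiagonal_succ, h0, h1, h2, h4, h6, h8]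
    at e13 e15 e17 e19 e22 e24 e26 e28 e35 e37
  have hω11 : ω 1 1 = coeff 3 B := e13.symm
  rw [hω11] at e15 e17 e19 e22 e24 e26 e28
  have hω13 : ω 1 3 = coeff 5 B - coeff 3 B ^ 2 := by linear_combination -e15
  rw [hω13] at e17 e19 e24 e26 e28
  have hω15 : ω 1 5 = coeff 7 B - 2 * coeff 3 B * coeff 5 B + coeff 3 B ^ 3 := by
    linear_combination -e17
  rw [hω15] at e19 e26 e28 e35
  have hω17 : ω 1 7 = coeff 9 B - 2 * coeff 3 B * coeff 7 B - coeff 5 B ^ 2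
      + 3 * coeff 3 B ^ 2 * coeff 5 B - coeff 3 B ^ 4 := by
    linear_combination -e19
  rw [hω17] at e28 e37
  have hω20 : ω 2 0 = coeff 3 B := by linear_combination -e22 / 2
  rw [hω20] at e24 e26 e28 e35 e37
  have hω22 : ω 2 2 = coeff 5 B - 3 / 2 * coeff 3 B ^ 2 := by linear_combination -e24 / 2
  rw [hω22] at e26 e28 e35 e37
  have hω24 : ω 2 4 = coeff 7 B - 3 * coeff 3 B * coeff 5 B + 2 * coeff 3 B ^ 3 := by
    linear_combination -e26 / 2
  rw [hω24] at e28 e35 e37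
  rw [hsym, hω13] at e35 e37
  have hω33 : ω 3 3 = coeff 7 B - 3 * coeff 3 B * coeff 5 B + 7 / 3 * coeff 3 B ^ 3 := by
    linear_combination e35 / 3
  rw [hω33] at e37
  -- `ω₂₆` is only known through `e28`, and cancels in this combination
  exact ⟨hω11, hω13, hω33, by linear_combination (e37 - 2 * e28) / 3⟩

theorem stmt_5_general (f : ℂ → ℂ)
    (hf0 : f 0 = 0)
    (a : ℕ → ℂ) (ha : ∀ z ∈ Metric.ball (0:ℂ) 1, HasSum (fun n => a n * z ^ n) (f z))
    (f₂ : ℂ → ℂ) (hA₂ : AnalyticOn ℂ f₂ (Metric.ball 0 1))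
    (hsq : ∀ z ∈ Metric.ball (0:ℂ) 1, (f₂ z) ^ 2 = f (z ^ 2))
    (hd₂ : deriv f₂ 0 = 1)
    (ω : ℕ → ℕ → ℂ) (hsym : ∀ p q, ω p q = ω q p)
    (hω : ∀ t ∈ Metric.ball (0:ℂ) 1, ∀ z ∈ Metric.ball (0:ℂ) 1, t ≠ z →
      ∃ w, HasSum (fun pq : ℕ × ℕ => ω pq.1 pq.2 * t ^ pq.1 * z ^ pq.2) w ∧
        Complex.exp w = (f₂ t - f₂ z) / (t - z)) :
    a 4 = 2 * ω 3 3 + 8 * ω 1 1 * ω 1 3 + (10 / 3) * ω 1 1 ^ 3 ∧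
    a 5 = 2 * ω 3 5 + 8 * ω 1 1 * ω 3 3 + 5 * ω 1 3 ^ 2 +
      18 * ω 1 1 ^ 2 * ω 1 3 + (7 / 3) * ω 1 1 ^ 4 := by
  have hB := hA₂.differentiableOn.hasPowerSeriesOnBall
  set B := mk fun n => iteratedDeriv n f₂ 0 / n.factorial
  have hb0 : coeff 0 B = 0 := by
    simpa [B, hf0] using hsq 0 (mem_ball_self one_pos)
  have hb1 : coeff 1 B = 1 := by simp [B, hd₂]
  have hA : HasPowerSeriesOnBall f (mk a) 1 := fun z hz => by
    simpa using ha z (mem_ball_zero_iff.2 hz)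
  have hsqB : B * B = expand 2 two_ne_zero (mk a) :=
    (hB.mul hB).unique ((hA.comp_pow two_ne_zero (by norm_num)).congr fun z hz => by
      rw [← hsq z (mem_ball_zero_iff.2 hz), sq]) one_pos
  obtain ⟨hb2, hb4, hb6, hb8, ha4, ha5⟩ := coeffs_of_mul_self_eq_expand_two hsqB hb0 hb1
  obtain ⟨I1, I2, I3⟩ :=
    HasGrunskyCoeffs.series_identities (F := f₂) hω one_pos hB hb0 hb1 hb2
  obtain ⟨h11, h13, h33, h35⟩ :=
    grunsky_coeffs_of_series_identities hb0 hb1 hb2 hb4 hb6 hb8 (hsym 3 1) I1 I2 I3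
  simp only [coeff_mk] at ha4 ha5
  rw [ha4, ha5, h11, h13, h33, h35]
  constructor <;> ring

theorem stmt_5 (f : ℂ → ℂ) (hA : AnalyticOn ℂ f (Metric.ball 0 1))
    (hI : Set.InjOn f (Metric.ball 0 1))
    (hf0 : f 0 = 0) (hf1 : deriv f 0 = 1)
    (a : ℕ → ℂ) (ha : ∀ z ∈ Metric.ball (0:ℂ) 1, HasSum (fun n => a n * z ^ n) (f z))
    (ha0 : a 0 = 0) (ha1 : a 1 = 1)
    (f₂ : ℂ → ℂ) (hA₂ : AnalyticOn ℂ f₂ (Metric.ball 0 1))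
    (hsq : ∀ z ∈ Metric.ball (0:ℂ) 1, (f₂ z) ^ 2 = f (z ^ 2))
    (hd₂ : deriv f₂ 0 = 1)
    (ω : ℕ → ℕ → ℂ) (hsym : ∀ p q, ω p q = ω q p)
    (hω : ∀ t ∈ Metric.ball (0:ℂ) 1, ∀ z ∈ Metric.ball (0:ℂ) 1, t ≠ z →
      ∃ w, HasSum (fun pq : ℕ × ℕ => ω pq.1 pq.2 * t ^ pq.1 * z ^ pq.2) w ∧
        Complex.exp w = (f₂ t - f₂ z) / (t - z)) :
    a 4 = 2 * ω 3 3 + 8 * ω 1 1 * ω 1 3 + (10 / 3) * ω 1 1 ^ 3 ∧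
    a 5 = 2 * ω 3 5 + 8 * ω 1 1 * ω 3 3 + 5 * ω 1 3 ^ 2 +
      18 * ω 1 1 ^ 2 * ω 1 3 + (7 / 3) * ω 1 1 ^ 4 :=
  stmt_5_general f hf0 a ha f₂ hA₂ hsq hd₂ ω hsym hω
end

section
/- The function Φ(u,v) = (1/√5)√(1−u²−3v²) + u³/6 on the domain Ω = {(u,v) : 0 ≤ u ≤ 1, 0 ≤ v ≤ (1/√3)√(1−u²)} attains its maximum value 1/√5. -/
/-! Since `√(1 - u² - 3v²) ≤ √(1 - u²) ≤ 1 - u²/2` and `√5 · u³/6 ≤ u³/2 ≤ u²/2` on `0 ≤ u ≤ 1`,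
we get `√5 · Φ(u, v) ≤ 1`, with equality at the corner `(0, 0)`. -/

open Real

noncomputable def phi (u v : ℝ) : ℝ := 1 / √5 * √(1 - u ^ 2 - 3 * v ^ 2) + u ^ 3 / 6

lemma sqrt_one_sub_le_one_sub_half {t : ℝ} (ht : t ≤ 2) : √(1 - t) ≤ 1 - t / 2 :=
  sqrt_le_iff.mpr ⟨by linarith, by nlinarith [sq_nonneg t]⟩

lemma sqrt_five_le_three : √5 ≤ 3 :=
  sqrt_le_iff.mpr ⟨by norm_num, by norm_num⟩

lemma sqrt_add_sqrt_five_mul_cube_le_one {u : ℝ} (v : ℝ) (hu₀ : 0 ≤ u) (hu₁ : u ≤ 1) :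
    √(1 - u ^ 2 - 3 * v ^ 2) + √5 * (u ^ 3 / 6) ≤ 1 := by
  have hsqrt : √(1 - u ^ 2 - 3 * v ^ 2) ≤ 1 - u ^ 2 / 2 :=
    (sqrt_le_sqrt (by nlinarith)).trans (sqrt_one_sub_le_one_sub_half (by nlinarith))
  have hcube : √5 * (u ^ 3 / 6) ≤ u ^ 2 / 2 := calc
    √5 * (u ^ 3 / 6) ≤ 3 * (u ^ 3 / 6) := by gcongr; exact sqrt_five_le_three
    _ ≤ u ^ 2 / 2 := by nlinarith [mul_nonneg (sq_nonneg u) (sub_nonneg.2 hu₁)]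
  linarith

lemma phi_le {u : ℝ} (v : ℝ) (hu₀ : 0 ≤ u) (hu₁ : u ≤ 1) : phi u v ≤ 1 / √5 := by
  have h5 : 0 < √5 := by positivity
  have hsum := sqrt_add_sqrt_five_mul_cube_le_one v hu₀ hu₁
  calc phi u v = (√(1 - u ^ 2 - 3 * v ^ 2) + √5 * (u ^ 3 / 6)) / √5 := by
        unfold phi; field_simp
    _ ≤ 1 / √5 := by gcongr

lemma phi_zero_zero : phi 0 0 = 1 / √5 := by
  norm_num [phi]

theorem stmt_11 :
    (∀ u v : ℝ, 0 ≤ u → u ≤ 1 → 0 ≤ v → v ≤ (1 / Real.sqrt 3) * Real.sqrt (1 - u ^ 2) →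
      (1 / Real.sqrt 5) * Real.sqrt (1 - u ^ 2 - 3 * v ^ 2) + u ^ 3 / 6 ≤ 1 / Real.sqrt 5) ∧
    (∃ u v : ℝ, 0 ≤ u ∧ u ≤ 1 ∧ 0 ≤ v ∧ v ≤ (1 / Real.sqrt 3) * Real.sqrt (1 - u ^ 2) ∧
      (1 / Real.sqrt 5) * Real.sqrt (1 - u ^ 2 - 3 * v ^ 2) + u ^ 3 / 6 = 1 / Real.sqrt 5) :=
  ⟨fun _ v hu₀ hu₁ _ _ => phi_le v hu₀ hu₁,
    ⟨0, 0, le_rfl, zero_le_one, le_rfl, by positivity, phi_zero_zero⟩⟩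
end

section
/- The function Ψ(s,t) = (1/√7)√(1−s−3t) + t/2 + s²/12 on the domain {(s,t) : 0 ≤ s ≤ 1, 0 ≤ t ≤ (1−s)/3} attains its maximum value 1/√7, achieved at s=t=0. -/
/-! Write `u = 1 - s - 3t`. AM-GM gives `√u ≤ (1 + u) / 2 = 1 - s/2 - 3t/2`, and `√7 ≤ 3` gives
`√7 (t/2 + s²/12) ≤ 3t/2 + s²/4`; the sum is at most `1 - s/2 + s²/4 ≤ 1` because `s² ≤ s` on `[0, 1]`. -/

open Real

lemma Real.sqrt_le_one_add_div_two {u : ℝ} (hu : 0 ≤ u) : √u ≤ (1 + u) / 2 :=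
  Real.sqrt_le_iff.mpr ⟨by linarith, by nlinarith [sq_nonneg (1 - u)]⟩

lemma Real.sqrt_seven_le_three : √7 ≤ 3 :=
  Real.sqrt_le_iff.mpr ⟨by norm_num, by norm_num⟩

lemma sqrt_add_sqrt_seven_mul_le_one {s t : ℝ} (hs : 0 ≤ s) (hs1 : s ≤ 1) (ht : 0 ≤ t)
    (ht3 : t ≤ (1 - s) / 3) : √(1 - s - 3 * t) + √7 * (t / 2 + s ^ 2 / 12) ≤ 1 := by
  have hroot : √(1 - s - 3 * t) ≤ (1 + (1 - s - 3 * t)) / 2 :=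
    Real.sqrt_le_one_add_div_two (by linarith)
  have hweight : √7 * (t / 2 + s ^ 2 / 12) ≤ 3 * (t / 2 + s ^ 2 / 12) :=
    mul_le_mul_of_nonneg_right Real.sqrt_seven_le_three (by positivity)
  nlinarith [mul_le_mul_of_nonneg_left hs1 hs]

theorem stmt_12 :
    (∀ s t : ℝ, 0 ≤ s → s ≤ 1 → 0 ≤ t → t ≤ (1 - s) / 3 →
      (1 / Real.sqrt 7) * Real.sqrt (1 - s - 3 * t) + t / 2 + s ^ 2 / 12 ≤ 1 / Real.sqrt 7) ∧
    (1 / Real.sqrt 7) * Real.sqrt (1 - 0 - 3 * 0) + 0 / 2 + (0:ℝ) ^ 2 / 12 = 1 / Real.sqrt 7 := by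
  refine ⟨fun s t hs hs1 ht ht3 => ?_, by simp⟩
  have h7 : 0 < √7 := by positivity
  calc 1 / √7 * √(1 - s - 3 * t) + t / 2 + s ^ 2 / 12
      = (√(1 - s - 3 * t) + √7 * (t / 2 + s ^ 2 / 12)) / √7 := by field_simp; ring
    _ ≤ 1 / √7 := by gcongr; exact sqrt_add_sqrt_seven_mul_le_one hs hs1 ht ht3
end

section
/- Let ω₁₁, ω₁₃, ω₁₅ ∈ ℂ with |ω₁₁|² + 3|ω₁₃|² + 5|ω₁₅|² ≤ 1. Then |ω₁₅| + |ω₁₁|³/6 ≤ 1/√5. -/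
/-! Since `|ω₁₁| ≤ 1`, we have `|ω₁₁|³ ≤ |ω₁₁|² ≤ 1 - 5|ω₁₅|²`, so it suffices to bound
`c + (1 - 5c²)/6` for `5c² ≤ 1`. This quadratic increases up to `c = 3/5 > 1/√5`, hence its maximum
on the constraint set is attained at `c = 1/√5`, where it equals `1/√5`. -/

lemma add_one_sub_five_mul_sq_div_six_le {c : ℝ} (hc : 5 * c ^ 2 ≤ 1) :
    c + (1 - 5 * c ^ 2) / 6 ≤ 1 / √5 := by
  have hs : √5 ^ 2 = 5 := Real.sq_sqrt (by norm_num)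
  have hs_pos : 0 < √5 := by positivity
  have hcs : √5 * c ≤ 1 := by
    have : (√5 * c) ^ 2 ≤ 1 ^ 2 := by rw [mul_pow, hs]; linarith
    exact abs_le_of_sq_le_sq' this zero_le_one |>.2
  have hs_lt : √5 < 3 := by nlinarith
  -- `1/√5 - c - (1 - 5c²)/6 = (1 - √5 c)(6 - √5 - 5c)/(6√5)`
  rw [le_div_iff₀ hs_pos]
  nlinarith [mul_nonneg (sub_nonneg.2 hcs) (sub_nonneg.2 hs_lt.le)]

lemma add_pow_three_div_six_le {a c : ℝ} (ha : 0 ≤ a) (h : a ^ 2 + 5 * c ^ 2 ≤ 1) :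
    c + a ^ 3 / 6 ≤ 1 / √5 := by
  have ha1 : a ≤ 1 := by nlinarith [sq_nonneg c]
  have hcube : a ^ 3 ≤ a ^ 2 := pow_le_pow_of_le_one ha ha1 (by norm_num)
  calc c + a ^ 3 / 6 ≤ c + (1 - 5 * c ^ 2) / 6 := by linarith
    _ ≤ 1 / √5 := add_one_sub_five_mul_sq_div_six_le (by linarith [sq_nonneg a])

theorem stmt_17 (ω₁₁ ω₁₃ ω₁₅ : ℂ)
    (h : ‖ω₁₁‖ ^ 2 + 3 * ‖ω₁₃‖ ^ 2 + 5 * ‖ω₁₅‖ ^ 2 ≤ 1) :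
    ‖ω₁₅‖ + ‖ω₁₁‖ ^ 3 / 6 ≤ 1 / Real.sqrt 5 :=
  add_pow_three_div_six_le (norm_nonneg _) (by linarith [sq_nonneg ‖ω₁₃‖])
end
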